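/- Let n ≥ 2, k ≥ 1, m ≥ 0, let S_1, …, S_n ⊆ S be action sets, and set β := min(m/k, 1). Let (x_i^ng)_{i=1}^n be any nominal greedy profile and (x_i^ag, z_i^ag)_{i=1}^n be any augmented greedy profile for (f, (S_i), k, m). Then f(x_1^ag ∪ … ∪ x_n^ag) ≥ f(x_1^ng ∪ … ∪ x_n^ng) / (2 − β^{n−1}/(∑_{i=0}^{n−1} β^i)). -/

import Mathlib

/-!
Write `X_i` for the union of the first `i` augmented greedy choices, `a_i = Δ(x_i | X_i)` for
the gain of agent `i`, and `σ_j = ∑_{t<j} β^t`. For any feasible profile `y` (in particular the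
nominal greedy one), submodularity gives `f(∪ y) ≤ f(X_n) + ∑_{i<n-1} c_i` with
`c_i = Δ(y_i | X_{n-1})`. Each `c_i` is at most `a_i`, since agent `i` could have chosen `y_i`,
and `β c_i ≤ a_{i+1}`, since agent `i + 1` could have chosen the best `min k m` elements of `S_i`
forwarded by agent `i`, and some `min k m` elements of `y_i` already carry a `β`-fraction of its
marginal value. These constraints force `σ_n ∑ c_i ≤ σ_{n-1} ∑ a_i = σ_{n-1} f(X_n)`, hence
`f(∪ y) ≤ (1 + σ_{n-1}/σ_n) f(X_n) = (2 - β^{n-1}/σ_n) f(X_n)`.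
-/

open Finset

variable {α : Type*}

/-- `f` is monotone on finsets. -/
def IsMonotoneFn (f : Finset α → ℝ) : Prop := ∀ A B : Finset α, A ⊆ B → f A ≤ f B

/-- `f` is submodular. -/
def IsSubmodularFn [DecidableEq α] (f : Finset α → ℝ) : Prop :=
  ∀ A B : Finset α, A ⊆ B → ∀ s ∉ B, f (insert s A) - f A ≥ f (insert s B) - f B

/-- Marginal contribution Δ(A|B) = f(A ∪ B) − f(B). -/
def marg [DecidableEq α] (f : Finset α → ℝ) (A B : Finset α) : ℝ := f (A ∪ B) - f B

/-- Δ^l(A|B): best marginal of a subset of `A` of size at most `l`. -/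
noncomputable def margSup [DecidableEq α] (f : Finset α → ℝ) (l : ℕ) (A B : Finset α) : ℝ :=
  (A.powerset.filter (fun C => C.card ≤ l)).sup' ⟨∅, by simp⟩ (fun C => marg f C B)

/-- Union of the first `i` sets: x_0 ∪ ⋯ ∪ x_{i-1}. -/
def pref [DecidableEq α] (x : ℕ → Finset α) (i : ℕ) : Finset α := (Finset.range i).biUnion x

/-- A nominal greedy profile. -/
def NomGreedy [DecidableEq α] (f : Finset α → ℝ) (Ss : ℕ → Finset α) (k n : ℕ)
    (x : ℕ → Finset α) : Prop :=
  ∀ i < n, x i ⊆ Ss i ∧ (x i).card ≤ k ∧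
    ∀ c : Finset α, c ⊆ Ss i → c.card ≤ k → f (c ∪ pref x i) ≤ f (x i ∪ pref x i)

/-- An augmented greedy profile. -/
def AugGreedy [DecidableEq α] (f : Finset α → ℝ) (Ss : ℕ → Finset α) (k m n : ℕ)
    (x z : ℕ → Finset α) : Prop :=
  ∀ i < n,
    (x i ⊆ Ss i ∪ pref z i ∧ (x i).card ≤ k ∧
      ∀ c : Finset α, c ⊆ Ss i ∪ pref z i → c.card ≤ k →
        f (c ∪ pref x i) ≤ f (x i ∪ pref x i)) ∧
    ∃ zk zr : Finset α,
      z i = zk ∪ zr ∧ zk ⊆ Ss i ∧ zk.card ≤ min k m ∧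
      (∀ w : Finset α, w ⊆ Ss i → w.card ≤ min k m →
        marg f w (pref x (i + 1)) ≤ marg f zk (pref x (i + 1))) ∧
      zr ⊆ Ss i ∧ zr.card ≤ m - k

/-- The optimal value OPT(f, (S_i), k) over feasible profiles with n agents. -/
noncomputable def OPTval [DecidableEq α] [Fintype α] (f : Finset α → ℝ) (Ss : ℕ → Finset α)
    (n k : ℕ) : ℝ :=
  ((Finset.univ : Finset (Fin n → Finset α)).filter
      (fun y => ∀ i : Fin n, y i ⊆ Ss (i : ℕ) ∧ (y i).card ≤ k)).sup'
    ⟨(fun _ => ∅), by simp⟩ (fun y => f (Finset.univ.biUnion (fun i => y i)))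

section Submodular

variable [DecidableEq α] {f : Finset α → ℝ}

lemma marg_nonneg (hmono : IsMonotoneFn f) (A B : Finset α) : 0 ≤ marg f A B :=
  sub_nonneg.2 (hmono _ _ subset_union_right)

lemma marg_empty (B : Finset α) : marg f ∅ B = 0 := by
  simp [marg]

lemma insert_sub_antitone (hmono : IsMonotoneFn f) (hsub : IsSubmodularFn f) (s : α)
    {B C : Finset α} (h : B ⊆ C) : f (insert s C) - f C ≤ f (insert s B) - f B := by
  by_cases hs : s ∈ C
  · rw [insert_eq_self.2 hs, sub_self]
    exact sub_nonneg.2 (hmono _ _ (subset_insert _ _))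
  · exact hsub B C h s hs

lemma marg_antitone (hmono : IsMonotoneFn f) (hsub : IsSubmodularFn f) (A : Finset α)
    {B C : Finset α} (h : B ⊆ C) : marg f A C ≤ marg f A B := by
  induction A using Finset.induction_on with
  | empty => simp [marg]
  | insert a A _ ih =>
    simp only [marg, insert_union] at ih ⊢
    linarith [insert_sub_antitone hmono hsub a (union_subset_union_right h : A ∪ B ⊆ A ∪ C)]

lemma marg_union_le (hmono : IsMonotoneFn f) (hsub : IsSubmodularFn f) (A A' B : Finset α) :
    marg f (A ∪ A') B ≤ marg f A B + marg f A' B := by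
  have h := marg_antitone hmono hsub A (subset_union_right : B ⊆ A' ∪ B)
  simp only [marg, union_assoc] at h ⊢
  linarith

lemma marg_biUnion_le {ι : Type*} [DecidableEq ι] (hmono : IsMonotoneFn f)
    (hsub : IsSubmodularFn f) (s : Finset ι) (y : ι → Finset α) (B : Finset α) :
    marg f (s.biUnion y) B ≤ ∑ i ∈ s, marg f (y i) B := by
  induction s using Finset.induction_on with
  | empty => simp [marg]
  | insert i s hi ih =>
    rw [biUnion_insert, sum_insert hi]
    linarith [marg_union_le hmono hsub (y i) (s.biUnion y) B]

lemma marg_sub_marg_erase {A : Finset α} (B : Finset α) {x : α} (hx : x ∈ A) :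
    marg f A B - marg f (A.erase x) B = marg f {x} (A.erase x ∪ B) := by
  rw [marg, marg, marg, ← union_assoc, ← insert_eq, insert_erase hx]
  ring

lemma sum_marg_sub_marg_erase_le (hmono : IsMonotoneFn f) (hsub : IsSubmodularFn f)
    (A B : Finset α) : ∑ x ∈ A, (marg f A B - marg f (A.erase x) B) ≤ marg f A B := by
  induction A using Finset.induction_on with
  | empty => simp [marg]
  | insert y A hy ih =>
    have hterm : ∀ x ∈ A, marg f (insert y A) B - marg f ((insert y A).erase x) B
        ≤ marg f A B - marg f (A.erase x) B := fun x hx => by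
      rw [marg_sub_marg_erase B (mem_insert_of_mem hx), marg_sub_marg_erase B hx]
      exact marg_antitone hmono hsub _ (union_subset_union_left (erase_subset_erase x
        (subset_insert y A)))
    rw [sum_insert hy, erase_insert hy]
    linarith [sum_le_sum hterm]

lemma exists_mem_marg_erase (hmono : IsMonotoneFn f) (hsub : IsSubmodularFn f)
    {A : Finset α} (hA : A.Nonempty) (B : Finset α) :
    ∃ x ∈ A, ((A.card : ℝ) - 1) * marg f A B ≤ A.card * marg f (A.erase x) B := by
  apply exists_le_of_sum_le hA
  rw [sum_const, nsmul_eq_mul, ← mul_sum]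
  gcongr
  have h := sum_marg_sub_marg_erase_le hmono hsub A B
  rw [sum_sub_distrib, sum_const, nsmul_eq_mul] at h
  linarith

lemma exists_subset_card_eq_marg (hmono : IsMonotoneFn f) (hsub : IsSubmodularFn f)
    (A B : Finset α) {j : ℕ} (hj : j ≤ A.card) :
    ∃ w ⊆ A, w.card = j ∧ (j : ℝ) * marg f A B ≤ A.card * marg f w B := by
  obtain ⟨d, hd⟩ := Nat.exists_eq_add_of_le hj
  induction d generalizing A with
  | zero => exact ⟨A, Subset.rfl, by omega, by rw [hd, add_zero]⟩
  | succ d ih =>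
    have hA : A.Nonempty := card_pos.1 (by omega)
    obtain ⟨x, hx, hxA⟩ := exists_mem_marg_erase hmono hsub hA B
    have hcard : (A.erase x).card = j + d := by rw [card_erase_of_mem hx]; omega
    obtain ⟨w, hwA, hwj, hw⟩ := ih (A.erase x) (by omega) hcard
    refine ⟨w, hwA.trans (erase_subset x A), hwj, ?_⟩
    rw [hcard] at hw
    rw [hd] at hxA ⊢
    push_cast at hw hxA ⊢
    have hw0 := marg_nonneg hmono w B
    rcases Nat.eq_zero_or_pos (j + d) with h0 | hpos
    · obtain rfl : j = 0 := by omega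
      rw [Nat.cast_zero, zero_mul]
      exact mul_nonneg (by positivity) hw0
    · have hpos : (0 : ℝ) < j + d := by exact_mod_cast hpos
      refine le_of_mul_le_mul_left ?_ hpos
      nlinarith

end Submodular

lemma min_div_one_mul_le {k m a : ℕ} (ha : a ≤ k) :
    min ((m : ℝ) / k) 1 * a ≤ (min (min k m) a : ℕ) := by
  rcases Nat.eq_zero_or_pos k with rfl | hk
  · simp [Nat.le_zero.1 ha]
  rw [show min (min k m) a = min m a by omega, Nat.cast_min]
  refine le_min ?_ ?_
  · calc min ((m : ℝ) / k) 1 * a ≤ m / k * a := by gcongr; exact min_le_left _ _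
      _ ≤ m / k * k := by gcongr
      _ = m := div_mul_cancel₀ _ (by positivity)
  · calc min ((m : ℝ) / k) 1 * a ≤ 1 * a := by gcongr; exact min_le_right _ _
      _ = a := one_mul _

lemma geom_sum_mul_sum_le {β : ℝ} (hβ : 0 ≤ β) {a c : ℕ → ℝ} {p : ℕ}
    (hca : ∀ i < p, c i ≤ a i) (hcb : ∀ i < p, β * c i ≤ a (i + 1)) :
    (∑ t ∈ range (p + 1), β ^ t) * ∑ i ∈ range p, c i
      ≤ (∑ t ∈ range p, β ^ t) * ∑ i ∈ range (p + 1), a i := by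
  induction p with
  | zero => simp
  | succ p ih =>
    have ih := ih (fun i hi => hca i (by omega)) (fun i hi => hcb i (by omega))
    have hC : ∑ i ∈ range p, c i + c p ≤ ∑ i ∈ range (p + 1), a i := by
      rw [sum_range_succ a p]
      exact add_le_add (sum_le_sum fun i hi => hca i (by simp at hi; omega)) (hca p (by omega))
    rw [sum_range_succ c p, sum_range_succ a (p + 1), geom_sum_succ (n := p + 1)]
    calc (β * ∑ t ∈ range (p + 1), β ^ t + 1) * (∑ i ∈ range p, c i + c p)
        = β * ((∑ t ∈ range (p + 1), β ^ t) * ∑ i ∈ range p, c i)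
          + (∑ t ∈ range (p + 1), β ^ t) * (β * c p) + (∑ i ∈ range p, c i + c p) := by
          ring
      _ ≤ β * ((∑ t ∈ range p, β ^ t) * ∑ i ∈ range (p + 1), a i)
          + (∑ t ∈ range (p + 1), β ^ t) * a (p + 1) + ∑ i ∈ range (p + 1), a i := by
        gcongr
        exact hcb p (by omega)
      _ = (∑ t ∈ range (p + 1), β ^ t) * (∑ i ∈ range (p + 1), a i + a (p + 1)) := by
        rw [geom_sum_succ (n := p)]
        ring

section Greedy

variable [DecidableEq α] {f : Finset α → ℝ} {Ss : ℕ → Finset α} {k m n : ℕ}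
  {x z : ℕ → Finset α}

lemma pref_zero (y : ℕ → Finset α) : pref y 0 = ∅ := rfl

lemma pref_succ (y : ℕ → Finset α) (i : ℕ) : pref y (i + 1) = y i ∪ pref y i := by
  rw [pref, pref, range_add_one, biUnion_insert]

lemma pref_mono (y : ℕ → Finset α) {i j : ℕ} (h : i ≤ j) : pref y i ⊆ pref y j :=
  biUnion_subset_biUnion_of_subset_left _ (range_subset_range.2 h)

lemma sum_marg_pref (y : ℕ → Finset α) (n : ℕ) :
    ∑ i ∈ range n, marg f (y i) (pref y i) = f (pref y n) - f ∅ := by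
  simp only [marg, ← pref_succ]
  exact sum_range_sub (fun i => f (pref y i)) n

lemma AugGreedy.marg_le (hag : AugGreedy f Ss k m n x z) {i : ℕ} (hi : i < n)
    {c : Finset α} (hc : c ⊆ Ss i ∪ pref z i) (hcard : c.card ≤ k) :
    marg f c (pref x i) ≤ marg f (x i) (pref x i) :=
  sub_le_sub_right ((hag i hi).1.2.2 c hc hcard) _

lemma AugGreedy.min_div_one_mul_marg_le (hmono : IsMonotoneFn f) (hsub : IsSubmodularFn f)
    (hag : AugGreedy f Ss k m n x z) {i : ℕ} (hi : i + 1 < n) {c : Finset α}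
    (hc : c ⊆ Ss i) (hcard : c.card ≤ k) :
    min ((m : ℝ) / k) 1 * marg f c (pref x (i + 1))
      ≤ marg f (x (i + 1)) (pref x (i + 1)) := by
  set B := pref x (i + 1)
  obtain ⟨-, zk, zr, hz, hzkS, hzkcard, hzk, -⟩ := hag i (by omega)
  obtain ⟨w, hwc, hwcard, hw⟩ :=
    exists_subset_card_eq_marg hmono hsub c B (min_le_right (min k m) c.card)
  have hwzk : marg f w B ≤ marg f zk B :=
    hzk w (hwc.trans hc) (hwcard.trans_le (min_le_left _ _))
  have hzkx : marg f zk B ≤ marg f (x (i + 1)) B := by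
    refine hag.marg_le hi (.trans ?_ subset_union_right) (hzkcard.trans (min_le_left _ _))
    have hzk_sub : zk ⊆ z i := hz ▸ subset_union_left
    exact hzk_sub.trans (subset_biUnion_of_mem z (self_mem_range_succ i))
  rcases c.eq_empty_or_nonempty with rfl | hne
  · rw [marg_empty, mul_zero]
    exact marg_nonneg hmono _ _
  have hpos : (0 : ℝ) < c.card := by exact_mod_cast card_pos.2 hne
  refine le_of_mul_le_mul_left ?_ hpos
  calc (c.card : ℝ) * (min ((m : ℝ) / k) 1 * marg f c B)
      = min ((m : ℝ) / k) 1 * c.card * marg f c B := by ring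
    _ ≤ (min (min k m) c.card : ℕ) * marg f c B := by
        gcongr
        · exact marg_nonneg hmono c B
        · exact min_div_one_mul_le hcard
    _ ≤ c.card * marg f (x (i + 1)) B := hw.trans (by gcongr; exact hwzk.trans hzkx)

theorem AugGreedy.geom_sum_mul_le (hnorm : f ∅ = 0) (hmono : IsMonotoneFn f)
    (hsub : IsSubmodularFn f) {p : ℕ} (hag : AugGreedy f Ss k m (p + 1) x z)
    {y : ℕ → Finset α} (hy : ∀ i < p + 1, y i ⊆ Ss i ∧ (y i).card ≤ k) :
    (∑ t ∈ range (p + 1), min ((m : ℝ) / k) 1 ^ t) * f (pref y (p + 1))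
      ≤ (∑ t ∈ range (p + 1), min ((m : ℝ) / k) 1 ^ t
          + ∑ t ∈ range p, min ((m : ℝ) / k) 1 ^ t) * f (pref x (p + 1)) := by
  set β := min ((m : ℝ) / k) 1
  have hβ : 0 ≤ β := le_min (by positivity) zero_le_one
  set c := fun i => marg f (y i) (pref x p)
  have hca : ∀ i < p + 1, c i ≤ marg f (x i) (pref x i) := fun i hi =>
    (marg_antitone hmono hsub _ (pref_mono x (by omega))).trans
      (hag.marg_le hi ((hy i hi).1.trans subset_union_left) (hy i hi).2)
  have hcb : ∀ i < p, β * c i ≤ marg f (x (i + 1)) (pref x (i + 1)) := fun i hi =>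
    (mul_le_mul_of_nonneg_left (marg_antitone hmono hsub _ (pref_mono x (by omega))) hβ).trans
      (hag.min_div_one_mul_marg_le hmono hsub (by omega) (hy i (by omega)).1 (hy i (by omega)).2)
  have hy_le : f (pref y (p + 1)) ≤ f (pref x (p + 1)) + ∑ i ∈ range p, c i := by
    have hunion : marg f (pref y (p + 1)) (pref x p) ≤ ∑ i ∈ range (p + 1), c i :=
      marg_biUnion_le hmono hsub (range (p + 1)) y (pref x p)
    have hlast : c p ≤ marg f (x p) (pref x p) := hca p (by omega)
    rw [sum_range_succ] at hunion
    simp only [marg] at hunion hlast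
    rw [pref_succ x p]
    linarith [hmono _ _ (subset_union_left : pref y (p + 1) ⊆ _ ∪ pref x p)]
  have hgeom := geom_sum_mul_sum_le hβ (fun i hi => hca i (by omega)) hcb
  rw [sum_marg_pref, hnorm, sub_zero] at hgeom
  nlinarith [geom_sum_pos hβ (Nat.succ_ne_zero p)]

end Greedy

theorem stmt4_general [DecidableEq α] (f : Finset α → ℝ)
    (hnorm : f ∅ = 0) (hmono : IsMonotoneFn f) (hsub : IsSubmodularFn f)
    (n k m : ℕ) (Ss : ℕ → Finset α)
    (xng : ℕ → Finset α) (hng : NomGreedy f Ss k n xng)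
    (xag zag : ℕ → Finset α) (hag : AugGreedy f Ss k m n xag zag) :
    f (pref xag n) ≥ f (pref xng n) /
      (2 - (min ((m : ℝ) / k) 1) ^ (n - 1) / ∑ i ∈ Finset.range n, (min ((m : ℝ) / k) 1) ^ i) := by
  obtain _ | p := n
  · simp [pref_zero, hnorm]
  have key := hag.geom_sum_mul_le hnorm hmono hsub fun i hi => ⟨(hng i hi).1, (hng i hi).2.1⟩
  set β := min ((m : ℝ) / k) 1
  have hs : 0 < ∑ t ∈ range (p + 1), β ^ t :=
    geom_sum_pos (le_min (by positivity) zero_le_one) (Nat.succ_ne_zero p)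
  have hdenom : 2 - β ^ p / ∑ t ∈ range (p + 1), β ^ t
      = (∑ t ∈ range (p + 1), β ^ t + ∑ t ∈ range p, β ^ t) / ∑ t ∈ range (p + 1), β ^ t := by
    rw [geom_sum_succ'] at hs ⊢
    field_simp
    ring
  rw [Nat.add_sub_cancel, hdenom, ge_iff_le, div_div_eq_mul_div, div_le_iff₀ (by positivity)]
  linarith

/-- Theorem 2, lower bound: augmented greedy loses at most the worst-case factor
relative to nominal greedy. -/
theorem stmt4 [DecidableEq α] [Fintype α] (f : Finset α → ℝ)
    (hnorm : f ∅ = 0) (hmono : IsMonotoneFn f) (hsub : IsSubmodularFn f)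
    (n k m : ℕ) (hn : 2 ≤ n) (hk : 1 ≤ k) (Ss : ℕ → Finset α)
    (xng : ℕ → Finset α) (hng : NomGreedy f Ss k n xng)
    (xag zag : ℕ → Finset α) (hag : AugGreedy f Ss k m n xag zag) :
    f (pref xag n) ≥ f (pref xng n) /
      (2 - (min ((m : ℝ) / k) 1) ^ (n - 1) / ∑ i ∈ Finset.range n, (min ((m : ℝ) / k) 1) ^ i) :=
  stmt4_general f hnorm hmono hsub n k m Ss xng hng xag zag hag
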